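/- arXiv:1111.1468 — 5 statements merged into one kernel-verified Lean document; each statement's English description precedes it below -/
import Mathlib

section
/- Let Ω ⊆ ℝⁿ (n ≥ 2) be a bounded Lipschitz domain with constant M and scale r₀, let D be a relatively open subset of ∂Ω with relative boundary Λ, δ(y) = dist(y, Λ), and assume Λ is Ahlfors (n−2+ε)-regular with constant M at scales below r₀, where ε ≥ 0. Then there is a constant C > 0, depending only on n, M and ε, such that for every x ∈ Λ, every 0 < r < r₀ and every 0 < t < 2r, σ(Δ_r(x) ∩ {y ∈ ∂Ω : δ(y) < t}) ≤ C·t^{1−ε}·r^{n−2+ε}, where σ is (n−1)-dimensional Hausdorff measure restricted to ∂Ω. -/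
open MeasureTheory Metric Set
open scoped RealInnerProductSpace ENNReal NNReal

noncomputable section

/-- `Ω ⊆ ℝⁿ` is a bounded Lipschitz domain with constant `M > 0` and scale `r₀ > 0`:
`Ω` is a bounded connected open set and near every boundary point, in suitable
orthonormal affine coordinates, `Ω` is the region above the graph of an `M`-Lipschitz
function in every coordinate cylinder of size up to `100 r₀ √(1+M²)`. -/
def IsLipschitzDomain (n : ℕ) (M r₀ : ℝ) (Ω : Set (EuclideanSpace ℝ (Fin n))) : Prop :=
  IsOpen Ω ∧ IsConnected Ω ∧ Bornology.IsBounded Ω ∧ 0 < M ∧ 0 < r₀ ∧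
  ∀ x ∈ frontier Ω,
    ∃ (f : EuclideanSpace ℝ (Fin (n - 1)) →ₗᵢ[ℝ] EuclideanSpace ℝ (Fin n))
      (e : EuclideanSpace ℝ (Fin n)) (φ : EuclideanSpace ℝ (Fin (n - 1)) → ℝ),
      ‖e‖ = 1 ∧ (∀ v, (inner ℝ (f v) e : ℝ) = 0) ∧
      LipschitzWith M.toNNReal φ ∧ φ 0 = 0 ∧
      ∀ s : ℝ, 0 < s → s ≤ 100 * r₀ * Real.sqrt (1 + M ^ 2) →
        (Ω ∩ {y | ∃ v t, ‖v‖ < s ∧ |t| < (1 + M) * s ∧ y = x + f v + t • e}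
          = {y | ∃ v t, ‖v‖ < s ∧ |t| < (1 + M) * s ∧ φ v < t ∧ y = x + f v + t • e}) ∧
        (frontier Ω ∩ {y | ∃ v t, ‖v‖ < s ∧ |t| < (1 + M) * s ∧ y = x + f v + t • e}
          = {y | ∃ v t, ‖v‖ < s ∧ |t| < (1 + M) * s ∧ φ v = t ∧ y = x + f v + t • e})

/-- `D` satisfies the corkscrew condition relative to `∂Ω`. -/
def Corkscrew (n : ℕ) (M r₀ : ℝ) (D Λ : Set (EuclideanSpace ℝ (Fin n))) : Prop :=
  ∀ x ∈ Λ, ∀ r : ℝ, 0 < r → r < r₀ →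
    ∃ x' ∈ D, dist x x' < r ∧ M⁻¹ * r < Metric.infDist x' Λ

/-- `Λ` is Ahlfors `d`-regular with constant `M` at scales below `r₀`. -/
def AhlforsRegular (n : ℕ) (d M r₀ : ℝ) (Λ : Set (EuclideanSpace ℝ (Fin n))) : Prop :=
  ∀ x ∈ Λ, ∀ r : ℝ, 0 < r → r < r₀ →
    ENNReal.ofReal (M⁻¹ * r ^ d) ≤ μH[d] (Metric.ball x r ∩ Λ) ∧
    μH[d] (Metric.ball x r ∩ Λ) ≤ ENNReal.ofReal (M * r ^ d)

/-!
Cover the points of `Λ` within distance `t` of `Δ_r(x)` by balls `B(b, 4t)` whose centres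
`b ∈ Λ` have pairwise disjoint `t`-balls (Vitali). Each `B(b, 5t) ∩ ∂Ω` lies in a Lipschitz
graph over an `(n-1)`-ball of radius `5t`, so its surface measure is `≲ t^(n-1)`. There are
`≲ (r/t)^(n-2+ε)` centres: the disjoint sets `B(b, t/2) ∩ Λ ⊆ B(x, 4r) ∩ Λ` each carry
`H^(n-2+ε)`-mass `≳ t^(n-2+ε)` by the lower Ahlfors bound, while `B(x, 4r) ∩ Λ` has mass
`≲ r^(n-2+ε)` by the upper one. Finally `t^(n-1) (r/t)^(n-2+ε) = t^(1-ε) r^(n-2+ε)`.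
-/

open Module

theorem card_mul_pow_le_of_pairwiseDisjoint_closedBall {E : Type*} [NormedAddCommGroup E]
    [NormedSpace ℝ E] [FiniteDimensional ℝ E] [MeasurableSpace E] [BorelSpace E]
    {u : Finset E} {x : E} {a R : ℝ} (ha : 0 < a) (hR : 0 ≤ R)
    (hux : ∀ b ∈ u, dist b x ≤ R) (hu : (u : Set E).PairwiseDisjoint (closedBall · a)) :
    (u.card : ℝ) * a ^ finrank ℝ E ≤ (R + a) ^ finrank ℝ E := by
  let μ : Measure E := Measure.addHaar
  have hsub : ⋃ b ∈ u, ball b a ⊆ ball x (R + a) := iUnion₂_subset fun b hb y hy =>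
    mem_ball.2 (by linarith [dist_triangle y b x, mem_ball.1 hy, hux b hb])
  have key : (u.card * ENNReal.ofReal (a ^ finrank ℝ E)) * μ (ball 0 1) ≤
      ENNReal.ofReal ((R + a) ^ finrank ℝ E) * μ (ball 0 1) :=
    calc (u.card * ENNReal.ofReal (a ^ finrank ℝ E)) * μ (ball 0 1)
        = ∑ b ∈ u, μ (ball b a) := by simp [μ.addHaar_ball_of_pos _ ha, mul_assoc]
      _ = μ (⋃ b ∈ u, ball b a) := (measure_biUnion_finset
          (hu.mono fun _ => ball_subset_closedBall) fun _ _ => measurableSet_ball).symm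
      _ ≤ μ (ball x (R + a)) := measure_mono hsub
      _ = _ := μ.addHaar_ball_of_pos _ (by positivity)
  rwa [ENNReal.mul_le_mul_iff_left (measure_ball_pos μ 0 one_pos).ne' measure_ball_lt_top.ne,
    ← ENNReal.ofReal_natCast, ← ENNReal.ofReal_mul (by positivity),
    ENNReal.ofReal_le_ofReal_iff (by positivity)] at key

theorem IsCompact.exists_finset_pairwiseDisjoint_closedBall_cover {X : Type*}
    [PseudoMetricSpace X] {K : Set X} (hK : IsCompact K) {a : ℝ} (ha : 0 < a) :
    ∃ u : Finset X, ↑u ⊆ K ∧ (u : Set X).PairwiseDisjoint (closedBall · a) ∧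
      ∀ y ∈ K, ∃ b ∈ u, dist y b ≤ 4 * a := by
  obtain ⟨F, hFK, hF, hKF⟩ := hK.finite_cover_balls ha
  obtain ⟨u, huF, hu, hFu⟩ := Vitali.exists_disjoint_subfamily_covering_enlargement_closedBall
    F id (fun _ => a) a (fun _ _ => le_rfl) 4 (by norm_num)
  refine ⟨(hF.subset huF).toFinset, by simpa using huF.trans hFK, by simpa using hu,
    fun y hy => ?_⟩
  obtain ⟨c, hcF, hyc⟩ := mem_iUnion₂.1 (hKF hy)
  obtain ⟨b, hbu, hcb⟩ := hFu c hcF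
  exact ⟨b, by simpa using hbu, mem_closedBall.1 (hcb (ball_subset_closedBall hyc))⟩

theorem hausdorffMeasure_euclideanSpace_ball_le (m : ℕ) {s : ℝ} (hs : 0 ≤ s) :
    μH[(m : ℝ)] (ball (0 : EuclideanSpace ℝ (Fin m)) s) ≤
      ENNReal.ofReal ((√m * (2 * s)) ^ m) := by
  have hsub : ball (0 : EuclideanSpace ℝ (Fin m)) s ⊆ WithLp.toLp 2 '' closedBall 0 s :=
    fun y hy => ⟨WithLp.ofLp y, mem_closedBall_zero_iff.2 <| (pi_norm_le_iff_of_nonneg hs).2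
      fun i => (PiLp.norm_apply_le y i).trans (mem_ball_zero_iff.1 hy).le, WithLp.toLp_ofLp 2 y⟩
  calc μH[(m : ℝ)] (ball (0 : EuclideanSpace ℝ (Fin m)) s)
      ≤ μH[(m : ℝ)] (WithLp.toLp 2 '' closedBall (0 : Fin m → ℝ) s) := measure_mono hsub
    _ ≤ ((m : ℝ≥0) ^ (1 / 2 : ℝ) : ℝ≥0) ^ (m : ℝ) *
          μH[(m : ℝ)] (closedBall (0 : Fin m → ℝ) s) := by
        simpa using (PiLp.lipschitzWith_toLp 2 fun _ : Fin m => ℝ).hausdorffMeasure_image_le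
          (Nat.cast_nonneg m) (closedBall (0 : Fin m → ℝ) s)
    _ = ENNReal.ofReal ((√m * (2 * s)) ^ m) := by
        have hsqrt : (((m : ℝ≥0) ^ (1 / 2 : ℝ) : ℝ≥0) : ℝ≥0∞) = ENNReal.ofReal √m := by
          rw [← NNReal.sqrt_eq_rpow, ← ENNReal.ofReal_coe_nnreal, Real.coe_sqrt,
            NNReal.coe_natCast]
        rw [(by simpa using hausdorffMeasure_pi_real (ι := Fin m) : μH[(m : ℝ)] = volume),
          Real.volume_pi_closedBall _ hs, Fintype.card_fin, hsqrt, ENNReal.rpow_natCast,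
          ← ENNReal.ofReal_pow (Real.sqrt_nonneg _), ← ENNReal.ofReal_mul (by positivity),
          ← mul_pow]

section OrthogonalGraph

variable {F E : Type*} [NormedAddCommGroup F] [InnerProductSpace ℝ F]
  [NormedAddCommGroup E] [InnerProductSpace ℝ E]

theorem norm_linearIsometry_add_smul_sq (f : F →ₗᵢ[ℝ] E) {e : E} (he : ‖e‖ = 1)
    (hfe : ∀ v, ⟪f v, e⟫ = 0) (v : F) (t : ℝ) :
    ‖f v + t • e‖ ^ 2 = ‖v‖ ^ 2 + t ^ 2 := by
  rw [norm_add_sq_real, real_inner_smul_right, hfe, norm_smul, f.norm_map, he]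
  simp

theorem exists_linearIsometry_add_smul_eq [FiniteDimensional ℝ F] [FiniteDimensional ℝ E]
    (f : F →ₗᵢ[ℝ] E) {e : E} (he : ‖e‖ = 1) (hfe : ∀ v, ⟪f v, e⟫ = 0)
    (hdim : finrank ℝ F + 1 = finrank ℝ E) (y : E) : ∃ v, ∃ t : ℝ, f v + t • e = y := by
  let T : F × ℝ →ₗ[ℝ] E := f.toLinearMap.coprod (LinearMap.toSpanSingleton ℝ E e)
  have hT : Function.Injective T := by
    rw [← LinearMap.ker_eq_bot, LinearMap.ker_eq_bot']
    rintro ⟨v, t⟩ h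
    have := norm_linearIsometry_add_smul_sq f he hfe v t
    simp only [T, LinearMap.coprod_apply, LinearIsometry.coe_toLinearMap,
      LinearMap.toSpanSingleton_apply] at h
    rw [h, norm_zero] at this
    have hv : ‖v‖ = 0 := by nlinarith [sq_nonneg ‖v‖, sq_nonneg t]
    have ht : t = 0 := by nlinarith [sq_nonneg ‖v‖, sq_nonneg t]
    exact Prod.ext (norm_eq_zero.1 hv) ht
  obtain ⟨⟨v, t⟩, hvt⟩ := (LinearMap.injective_iff_surjective_of_finrank_eq_finrank
    (by simp [hdim])).1 hT y
  exact ⟨v, t, hvt⟩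

end OrthogonalGraph

theorem lipschitzWith_graph {F E : Type*} [SeminormedAddCommGroup F] [NormedSpace ℝ F]
    [NormedAddCommGroup E] [NormedSpace ℝ E] (c : E) (f : F →ₗᵢ[ℝ] E) {e : E} (he : ‖e‖ = 1)
    {K : ℝ≥0} {φ : F → ℝ} (hφ : LipschitzWith K φ) :
    LipschitzWith (1 + K) fun v => c + f v + φ v • e := by
  refine LipschitzWith.of_dist_le_mul fun v w => ?_
  calc dist (c + f v + φ v • e) (c + f w + φ w • e)
      = ‖f (v - w) + (φ v - φ w) • e‖ := by
        rw [dist_eq_norm, map_sub, sub_smul]; congr 1; abel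
    _ ≤ ‖f (v - w)‖ + ‖(φ v - φ w) • e‖ := norm_add_le _ _
    _ = ‖v - w‖ + dist (φ v) (φ w) := by
        rw [f.norm_map, norm_smul, he, mul_one, Real.dist_eq, Real.norm_eq_abs]
    _ ≤ ‖v - w‖ + K * dist v w := by gcongr; exact hφ.dist_le_mul v w
    _ = (1 + K : ℝ≥0) * dist v w := by push_cast; rw [dist_eq_norm]; ring

theorem IsLipschitzDomain.hausdorffMeasure_ball_inter_frontier_le {n : ℕ} (hn : 1 ≤ n)
    {M r₀ : ℝ} {Ω : Set (EuclideanSpace ℝ (Fin n))} (hΩ : IsLipschitzDomain n M r₀ Ω)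
    {c : EuclideanSpace ℝ (Fin n)} (hc : c ∈ frontier Ω) {s : ℝ} (hs : 0 < s)
    (hs' : s ≤ 100 * r₀ * √(1 + M ^ 2)) :
    μH[(n : ℝ) - 1] (ball c s ∩ frontier Ω) ≤
      ENNReal.ofReal ((2 * (1 + M) * √((n : ℝ) - 1) * s) ^ (n - 1)) := by
  obtain ⟨-, -, -, hM, -, hchart⟩ := hΩ
  obtain ⟨f, e, φ, he, hfe, hφ, -, hcyl⟩ := hchart c hc
  have hdim : ((n - 1 : ℕ) : ℝ) = n - 1 := by rw [Nat.cast_sub hn, Nat.cast_one]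
  have himage : ball c s ∩ frontier Ω ⊆ (fun v => c + f v + φ v • e) '' ball 0 s := by
    rintro y ⟨hy, hyΩ⟩
    obtain ⟨v, t, hvt⟩ := exists_linearIsometry_add_smul_eq f he hfe (by simp; omega) (y - c)
    have hnorm : ‖v‖ ^ 2 + t ^ 2 < s ^ 2 := by
      rw [← norm_linearIsometry_add_smul_sq f he hfe, hvt, ← dist_eq_norm]
      exact pow_lt_pow_left₀ (mem_ball.1 hy) dist_nonneg two_ne_zero
    have hv : ‖v‖ < s := lt_of_pow_lt_pow_left₀ 2 hs.le (by nlinarith)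
    have ht : |t| < (1 + M) * s :=
      (abs_lt_of_sq_lt_sq (by nlinarith) hs.le).trans_le (by nlinarith)
    have hycyl : y ∈ frontier Ω ∩
        {y | ∃ v t, ‖v‖ < s ∧ |t| < (1 + M) * s ∧ y = c + f v + t • e} :=
      ⟨hyΩ, v, t, hv, ht, by rw [add_assoc, hvt]; abel⟩
    rw [(hcyl s hs hs').2] at hycyl
    obtain ⟨v', t', hv', -, hφt, rfl⟩ := hycyl
    exact ⟨v', mem_ball_zero_iff.2 hv', by simp only [hφt]⟩
  calc μH[(n : ℝ) - 1] (ball c s ∩ frontier Ω)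
      ≤ μH[(n : ℝ) - 1] ((fun v => c + f v + φ v • e) '' ball 0 s) := measure_mono himage
    _ ≤ ((1 + M.toNNReal : ℝ≥0) : ℝ≥0∞) ^ ((n : ℝ) - 1) * μH[(n : ℝ) - 1] (ball 0 s) :=
        (lipschitzWith_graph c f he hφ).hausdorffMeasure_image_le (by rw [← hdim]; positivity) _
    _ ≤ ENNReal.ofReal ((1 + M) ^ (n - 1)) *
          ENNReal.ofReal ((√((n : ℝ) - 1) * (2 * s)) ^ (n - 1)) := by
        rw [← hdim, ENNReal.rpow_natCast, ← ENNReal.ofReal_coe_nnreal, NNReal.coe_add,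
          NNReal.coe_one, Real.coe_toNNReal _ hM.le, ENNReal.ofReal_pow (by positivity)]
        gcongr
        exact hausdorffMeasure_euclideanSpace_ball_le (n - 1) hs.le
    _ = ENNReal.ofReal ((2 * (1 + M) * √((n : ℝ) - 1) * s) ^ (n - 1)) := by
        rw [← ENNReal.ofReal_mul (by positivity), ← mul_pow]
        ring_nf

theorem measure_biUnion_finset_le_card_mul {α ι : Type*} [MeasurableSpace α] (μ : Measure α)
    (u : Finset ι) (s : ι → Set α) {c : ℝ≥0∞} (h : ∀ i ∈ u, μ (s i) ≤ c) :
    μ (⋃ i ∈ u, s i) ≤ u.card * c :=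
  (measure_biUnion_finset_le u s).trans ((Finset.sum_le_card_nsmul u _ c h).trans_eq
    (nsmul_eq_mul _ _))

section AhlforsRegular

variable {n : ℕ} {d M r₀ : ℝ} {Λ : Set (EuclideanSpace ℝ (Fin n))}

-- The upper bound is only available at radii below `r₀`, so a large ball is covered by
-- `r`-balls whose number is controlled by volume packing.
theorem AhlforsRegular.hausdorffMeasure_ball_inter_le (hΛ : AhlforsRegular n d M r₀ Λ)
    (hΛc : IsClosed Λ) (x : EuclideanSpace ℝ (Fin n)) {R r : ℝ} (hR : 0 ≤ R) (hr : 0 < r)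
    (hrr₀ : r < r₀) :
    μH[d] (ball x R ∩ Λ) ≤ ENNReal.ofReal ((5 * R / r + 1) ^ n * (M * r ^ d)) := by
  obtain ⟨u, huK, hu, hcover⟩ := ((isCompact_closedBall x R).inter_left
    hΛc).exists_finset_pairwiseDisjoint_closedBall_cover (by positivity : 0 < r / 5)
  have hcard : (u.card : ℝ) ≤ (5 * R / r + 1) ^ n := by
    have := card_mul_pow_le_of_pairwiseDisjoint_closedBall (by positivity) hR
      (fun b hb => (huK hb).2) hu
    rw [finrank_euclideanSpace_fin, show R + r / 5 = (5 * R / r + 1) * (r / 5) by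
      field_simp, mul_pow] at this
    exact le_of_mul_le_mul_right this (by positivity)
  calc μH[d] (ball x R ∩ Λ) ≤ μH[d] (⋃ b ∈ u, ball b r ∩ Λ) := measure_mono fun y ⟨hy, hyΛ⟩ => by
        obtain ⟨b, hb, hyb⟩ := hcover y ⟨hyΛ, ball_subset_closedBall hy⟩
        exact mem_iUnion₂.2 ⟨b, hb, mem_ball.2 (by linarith), hyΛ⟩
    _ ≤ u.card * ENNReal.ofReal (M * r ^ d) := measure_biUnion_finset_le_card_mul _ _ _
        fun b hb => (hΛ b (huK hb).1 r hr hrr₀).2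
    _ ≤ ENNReal.ofReal ((5 * R / r + 1) ^ n) * ENNReal.ofReal (M * r ^ d) := by
        rw [← ENNReal.ofReal_natCast]
        gcongr
    _ = ENNReal.ofReal ((5 * R / r + 1) ^ n * (M * r ^ d)) :=
        (ENNReal.ofReal_mul (by positivity)).symm

theorem AhlforsRegular.card_mul_le_hausdorffMeasure (hΛ : AhlforsRegular n d M r₀ Λ)
    (hΛm : MeasurableSet Λ) {u : Finset (EuclideanSpace ℝ (Fin n))} (huΛ : ↑u ⊆ Λ)
    {x : EuclideanSpace ℝ (Fin n)} {R ρ : ℝ} (hux : ∀ b ∈ u, dist b x ≤ R)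
    (hu : (u : Set (EuclideanSpace ℝ (Fin n))).PairwiseDisjoint (ball · ρ)) (hρ : 0 < ρ)
    (hρr₀ : ρ < r₀) :
    u.card * ENNReal.ofReal (M⁻¹ * ρ ^ d) ≤ μH[d] (ball x (R + ρ) ∩ Λ) :=
  calc u.card * ENNReal.ofReal (M⁻¹ * ρ ^ d) = ∑ _b ∈ u, ENNReal.ofReal (M⁻¹ * ρ ^ d) := by
        rw [Finset.sum_const, nsmul_eq_mul]
    _ ≤ ∑ b ∈ u, μH[d] (ball b ρ ∩ Λ) :=
        Finset.sum_le_sum fun b hb => (hΛ b (huΛ hb) ρ hρ hρr₀).1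
    _ = μH[d] (⋃ b ∈ u, ball b ρ ∩ Λ) := (measure_biUnion_finset
        (hu.mono fun _ => inter_subset_left) fun _ _ => measurableSet_ball.inter hΛm).symm
    _ ≤ μH[d] (ball x (R + ρ) ∩ Λ) := measure_mono <| iUnion₂_subset fun b hb y ⟨hy, hyΛ⟩ =>
        ⟨mem_ball.2 (by linarith [dist_triangle y b x, mem_ball.1 hy, hux b hb]), hyΛ⟩

theorem AhlforsRegular.card_mul_rpow_le (hΛ : AhlforsRegular n d M r₀ Λ) (hΛc : IsClosed Λ)
    (hM : 0 < M) {u : Finset (EuclideanSpace ℝ (Fin n))} (huΛ : ↑u ⊆ Λ)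
    {x : EuclideanSpace ℝ (Fin n)} {r t : ℝ} (hux : ∀ b ∈ u, dist b x ≤ r + t)
    (hu : (u : Set (EuclideanSpace ℝ (Fin n))).PairwiseDisjoint (closedBall · t)) (ht : 0 < t)
    (htr : t < 2 * r) (hrr₀ : r < r₀) :
    (u.card : ℝ) * t ^ d ≤ 21 ^ n * M ^ 2 * 2 ^ d * r ^ d := by
  have hr : 0 < r := by linarith
  have hlow := hΛ.card_mul_le_hausdorffMeasure hΛc.measurableSet huΛ hux
    (hu.mono fun _ => ball_subset_closedBall.trans (closedBall_subset_closedBall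
      (by linarith : t / 2 ≤ t))) (by positivity : 0 < t / 2) (by linarith)
  have hup := hΛ.hausdorffMeasure_ball_inter_le hΛc x (by positivity : 0 ≤ 4 * r)
    (by linarith) hrr₀
  rw [show 5 * (4 * r) / r + 1 = 21 by field_simp; norm_num] at hup
  have key : (u.card : ℝ) * (M⁻¹ * (t / 2) ^ d) ≤ 21 ^ n * (M * r ^ d) := by
    have := hlow.trans ((measure_mono (inter_subset_inter_left _
      (ball_subset_ball (by linarith)))).trans hup)
    rwa [← ENNReal.ofReal_natCast, ← ENNReal.ofReal_mul (by positivity),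
      ENNReal.ofReal_le_ofReal_iff (by positivity)] at this
  rw [Real.div_rpow ht.le zero_le_two] at key
  have h2d : 0 < (2 : ℝ) ^ d := by positivity
  calc (u.card : ℝ) * t ^ d = (u.card * (M⁻¹ * (t ^ d / 2 ^ d))) * (M * 2 ^ d) := by
        field_simp
    _ ≤ 21 ^ n * (M * r ^ d) * (M * 2 ^ d) := by gcongr
    _ = 21 ^ n * M ^ 2 * 2 ^ d * r ^ d := by ring

end AhlforsRegular

theorem inter_infDist_lt_subset_biUnion_ball {X : Type*} [PseudoMetricSpace X] {Λ S : Set X}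
    {x : X} (hx : x ∈ Λ) {r t : ℝ} {u : Finset X}
    (hu : ∀ z ∈ Λ ∩ closedBall x (r + t), ∃ b ∈ u, dist z b ≤ 4 * t) :
    ball x r ∩ S ∩ {y | infDist y Λ < t} ⊆ ⋃ b ∈ u, ball b (5 * t) ∩ S := by
  rintro y ⟨⟨hy, hyS⟩, hyΛ⟩
  obtain ⟨z, hz, hyz⟩ := (infDist_lt_iff ⟨x, hx⟩).1 hyΛ
  obtain ⟨b, hb, hzb⟩ := hu z ⟨hz, mem_closedBall.2 (by
    linarith [dist_triangle z y x, dist_comm z y, mem_ball.1 hy])⟩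
  exact mem_iUnion₂.2 ⟨b, hb, mem_ball.2 (by linarith [dist_triangle y z b]), hyS⟩

theorem mul_pow_le_of_mul_rpow_le {n : ℕ} (hn : 1 ≤ n) {N A B t r ε : ℝ} (ht : 0 < t)
    (hA : 0 ≤ A) (hN : N * t ^ ((n : ℝ) - 2 + ε) ≤ B * r ^ ((n : ℝ) - 2 + ε)) :
    N * (A * t) ^ (n - 1) ≤ A ^ (n - 1) * B * t ^ (1 - ε) * r ^ ((n : ℝ) - 2 + ε) := by
  have htpow : t ^ (n - 1) = t ^ (1 - ε) * t ^ ((n : ℝ) - 2 + ε) := by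
    rw [← Real.rpow_add ht, ← Real.rpow_natCast, Nat.cast_sub hn]
    ring_nf
  calc N * (A * t) ^ (n - 1) = A ^ (n - 1) * t ^ (1 - ε) * (N * t ^ ((n : ℝ) - 2 + ε)) := by
        rw [mul_pow, htpow]
        ring
    _ ≤ A ^ (n - 1) * t ^ (1 - ε) * (B * r ^ ((n : ℝ) - 2 + ε)) := by gcongr
    _ = A ^ (n - 1) * B * t ^ (1 - ε) * r ^ ((n : ℝ) - 2 + ε) := by ring

theorem statement2_general (n : ℕ) (hn : 2 ≤ n) (M ε : ℝ) :
    ∃ C > 0, ∀ (r₀ : ℝ) (Ω D Λ : Set (EuclideanSpace ℝ (Fin n))),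
      IsLipschitzDomain n M r₀ Ω →
      (∃ U, IsOpen U ∧ D = U ∩ frontier Ω) →
      Λ = closure D ∩ (frontier Ω \ D) →
      AhlforsRegular n ((n : ℝ) - 2 + ε) M r₀ Λ →
      ∀ x ∈ Λ, ∀ r t : ℝ, 0 < r → r < r₀ → 0 < t → t < 2 * r →
        μH[(n : ℝ) - 1] (Metric.ball x r ∩ frontier Ω ∩ {y | Metric.infDist y Λ < t})
          ≤ ENNReal.ofReal (C * t ^ (1 - ε) * r ^ ((n : ℝ) - 2 + ε)) := by
  set C₀ := (10 * (1 + M) * √((n : ℝ) - 1)) ^ (n - 1) * (21 ^ n * M ^ 2 * 2 ^ ((n : ℝ) - 2 + ε))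
  refine ⟨max C₀ 1, lt_max_of_lt_right one_pos, ?_⟩
  rintro r₀ Ω D Λ hΩ ⟨U, hU, rfl⟩ hΛ hAhl x hx r t hr hrr₀ ht htr
  have hM : 0 < M := hΩ.2.2.2.1
  have hΛΩ : Λ ⊆ frontier Ω := hΛ ▸ fun y hy => hy.2.1
  have hΛc : IsClosed Λ := hΛ ▸ isClosed_closure.inter
    (by rw [sdiff_inter_self_eq_sdiff]; exact isClosed_frontier.sdiff hU)
  obtain ⟨u, huK, hu, hcover⟩ := ((isCompact_closedBall x (r + t)).inter_left
    hΛc).exists_finset_pairwiseDisjoint_closedBall_cover ht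
  have hcard := hAhl.card_mul_rpow_le hΛc hM (fun b hb => (huK hb).1)
    (fun b hb => (huK hb).2) hu ht htr hrr₀
  have hsurf : ∀ b ∈ u, μH[(n : ℝ) - 1] (ball b (5 * t) ∩ frontier Ω) ≤
      ENNReal.ofReal ((10 * (1 + M) * √((n : ℝ) - 1) * t) ^ (n - 1)) := fun b hb =>
    (hΩ.hausdorffMeasure_ball_inter_frontier_le (by omega) (hΛΩ (huK hb).1) (by positivity)
      (by nlinarith [Real.one_le_sqrt.2 (by nlinarith : (1 : ℝ) ≤ 1 + M ^ 2)])).trans_eq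
      (by ring_nf)
  calc μH[(n : ℝ) - 1] (ball x r ∩ frontier Ω ∩ {y | infDist y Λ < t})
      ≤ μH[(n : ℝ) - 1] (⋃ b ∈ u, ball b (5 * t) ∩ frontier Ω) :=
        measure_mono (inter_infDist_lt_subset_biUnion_ball hx hcover)
    _ ≤ u.card * ENNReal.ofReal ((10 * (1 + M) * √((n : ℝ) - 1) * t) ^ (n - 1)) :=
        measure_biUnion_finset_le_card_mul _ _ _ hsurf
    _ = ENNReal.ofReal (u.card * (10 * (1 + M) * √((n : ℝ) - 1) * t) ^ (n - 1)) := by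
        rw [← ENNReal.ofReal_natCast, ← ENNReal.ofReal_mul (by positivity)]
    _ ≤ ENNReal.ofReal (C₀ * t ^ (1 - ε) * r ^ ((n : ℝ) - 2 + ε)) :=
        ENNReal.ofReal_le_ofReal (mul_pow_le_of_mul_rpow_le (by omega) ht (by positivity) hcard)
    _ ≤ ENNReal.ofReal (max C₀ 1 * t ^ (1 - ε) * r ^ ((n : ℝ) - 2 + ε)) := by
        gcongr
        exact le_max_left _ _

/-- Lemma 2.2: measure of the `t`-collar of `Λ` inside a surface ball. -/
theorem statement2 (n : ℕ) (hn : 2 ≤ n) (M ε : ℝ) (hε : 0 ≤ ε) :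
    ∃ C > 0, ∀ (r₀ : ℝ) (Ω D Λ : Set (EuclideanSpace ℝ (Fin n))),
      IsLipschitzDomain n M r₀ Ω →
      (∃ U, IsOpen U ∧ D = U ∩ frontier Ω) →
      Λ = closure D ∩ (frontier Ω \ D) →
      AhlforsRegular n ((n : ℝ) - 2 + ε) M r₀ Λ →
      ∀ x ∈ Λ, ∀ r t : ℝ, 0 < r → r < r₀ → 0 < t → t < 2 * r →
        μH[(n : ℝ) - 1] (Metric.ball x r ∩ frontier Ω ∩ {y | Metric.infDist y Λ < t})
          ≤ ENNReal.ofReal (C * t ^ (1 - ε) * r ^ ((n : ℝ) - 2 + ε)) :=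
  statement2_general n hn M ε
end
end

section
/- Let Ω ⊆ ℝⁿ (n ≥ 2) be a bounded Lipschitz domain with constant M and scale r₀, let D be a relatively open subset of ∂Ω with relative boundary Λ, δ(y) = dist(y, Λ), and assume D satisfies the corkscrew condition. Then there is a constant c > 0, depending only on n and M, such that for every x ∈ D and every 0 < r < r₀ there exists a point x_D ∈ D with |x − x_D| ≤ r and Δ_{c·r}(x_D) ⊆ D. -/
open MeasureTheory Metric Set
open scoped RealInnerProductSpace ENNReal NNReal

noncomputable section

/-
An exit-point argument does the work. If `p ∈ D` and `q ∈ ∂Ω \ D` are close, then in the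
Lipschitz chart at `p` the point `q` lies on the graph over some `v` with `‖v‖ ≤ |p - q|`, and
the graph path over the segment `[0, v]` runs inside `∂Ω` from `p` to `q`. By connectedness it
leaves the relatively open set `D` at a point of `Λ`, at distance at most `(1 + M)|p - q|`.
So a surface ball `Δ_ρ(p)` that is not contained in `D` gives `δ(p) < (1 + M)ρ`. Now take
`c = 1 / (2(1 + M)²)`. Either `Δ_{cr}(x) ⊆ D`, or there is a point of `Λ` within `r/2` of `x`.
Its corkscrew point `x_D` at scale `r/2` has `δ(x_D) > r/(2M) ≥ (1 + M)cr`, so `Δ_{cr}(x_D) ⊆ D`.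
-/

theorem exists_apply_mem_closure_inter_diff {X Y : Type*} [TopologicalSpace X]
    [TopologicalSpace Y] [PreconnectedSpace Y] {γ : Y → X} (hγ : Continuous γ)
    {U B : Set X} (hU : IsOpen U) (hγB : ∀ y, γ y ∈ B) {a b : Y} (ha : γ a ∈ U)
    (hb : γ b ∉ U) : ∃ y, γ y ∈ closure (U ∩ B) ∩ (B \ U) := by
  have hT : (frontier (γ ⁻¹' U)).Nonempty :=
    nonempty_frontier_iff.2 ⟨⟨a, ha⟩, fun h => hb (h ▸ mem_univ b : b ∈ γ ⁻¹' U)⟩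
  obtain ⟨y, hy_cl, hy_notin⟩ := (hU.preimage hγ).frontier_eq ▸ hT
  refine ⟨y, closure_mono ?_ (mem_closure_image hγ.continuousAt hy_cl), hγB y, hy_notin⟩
  exact image_subset_iff.2 fun z hz => ⟨hz, hγB z⟩

section Orthogonal

variable {E F : Type*} [NormedAddCommGroup E] [InnerProductSpace ℝ E]
  [NormedAddCommGroup F] [InnerProductSpace ℝ F] (f : F →ₗᵢ[ℝ] E) {e : E}

theorem LinearIsometry.range_eq_orthogonal_span_singleton [FiniteDimensional ℝ E]
    (he : e ≠ 0) (horth : ∀ v, ⟪f v, e⟫ = 0)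
    (hdim : Module.finrank ℝ E ≤ Module.finrank ℝ F + 1) :
    LinearMap.range f.toLinearMap = (ℝ ∙ e)ᗮ := by
  have : FiniteDimensional ℝ F := Module.Finite.of_injective f.toLinearMap f.injective
  refine Submodule.eq_of_le_of_finrank_le ?_ ?_
  · rintro _ ⟨v, rfl⟩
    rw [Submodule.mem_orthogonal_singleton_iff_inner_right, real_inner_comm]
    exact horth v
  · have := Submodule.finrank_add_finrank_orthogonal (ℝ ∙ e)
    rw [finrank_span_singleton he] at this
    rw [LinearMap.finrank_range_of_inj f.injective]
    omega

theorem LinearIsometry.exists_eq_add_smul [FiniteDimensional ℝ E] (he : ‖e‖ = 1)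
    (horth : ∀ v, ⟪f v, e⟫ = 0) (hdim : Module.finrank ℝ E ≤ Module.finrank ℝ F + 1)
    (y : E) : ∃ (v : F) (t : ℝ), y = f v + t • e := by
  have he0 : e ≠ 0 := norm_ne_zero_iff.1 (he ▸ one_ne_zero)
  have hmem : y - ⟪e, y⟫ • e ∈ (ℝ ∙ e)ᗮ := by
    rw [Submodule.mem_orthogonal_singleton_iff_inner_right, inner_sub_right,
      real_inner_smul_right, real_inner_self_eq_norm_sq, he]
    ring
  rw [← f.range_eq_orthogonal_span_singleton he0 horth hdim] at hmem
  obtain ⟨v, hv⟩ := hmem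
  exact ⟨v, ⟪e, y⟫, by rw [LinearIsometry.coe_toLinearMap] at hv; rw [hv]; abel⟩

theorem LinearIsometry.norm_add_smul_sq (he : ‖e‖ = 1) (horth : ∀ v, ⟪f v, e⟫ = 0)
    (v : F) (t : ℝ) : ‖f v + t • e‖ ^ 2 = ‖v‖ ^ 2 + t ^ 2 := by
  rw [norm_add_sq_real, real_inner_smul_right, horth, f.norm_map, norm_smul, he,
    Real.norm_eq_abs, mul_one, sq_abs]
  ring

theorem LinearIsometry.norm_le_norm_add_smul (he : ‖e‖ = 1) (horth : ∀ v, ⟪f v, e⟫ = 0)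
    (v : F) (t : ℝ) : ‖v‖ ≤ ‖f v + t • e‖ := by
  refine le_of_sq_le_sq ?_ (norm_nonneg _)
  nlinarith [f.norm_add_smul_sq he horth v t]

theorem LinearIsometry.abs_le_norm_add_smul (he : ‖e‖ = 1) (horth : ∀ v, ⟪f v, e⟫ = 0)
    (v : F) (t : ℝ) : |t| ≤ ‖f v + t • e‖ := by
  refine abs_le_of_sq_le_sq ?_ (norm_nonneg _)
  nlinarith [f.norm_add_smul_sq he horth v t]

end Orthogonal

section LipschitzChart

variable {E F : Type*} [NormedAddCommGroup E] [InnerProductSpace ℝ E]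
  [NormedAddCommGroup F] [InnerProductSpace ℝ F] {Ω : Set E} {M s : ℝ} {x : E}
  {f : F →ₗᵢ[ℝ] E} {e : E} {φ : F → ℝ}

abbrev FrontierIsGraphOnCylinder (Ω : Set E) (M s : ℝ) (x : E) (f : F →ₗᵢ[ℝ] E) (e : E)
    (φ : F → ℝ) : Prop :=
  frontier Ω ∩ {y | ∃ v t, ‖v‖ < s ∧ |t| < (1 + M) * s ∧ y = x + f v + t • e}
    = {y | ∃ v t, ‖v‖ < s ∧ |t| < (1 + M) * s ∧ φ v = t ∧ y = x + f v + t • e}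

theorem add_add_smul_mem_frontier (hM : 0 ≤ M) (hφ : ∀ w, |φ w| ≤ M * ‖w‖)
    (hchart : FrontierIsGraphOnCylinder Ω M s x f e φ) {w : F} (hw : ‖w‖ < s) :
    x + f w + φ w • e ∈ frontier Ω := by
  have hφw : |φ w| < (1 + M) * s := by nlinarith [hφ w, norm_nonneg w]
  have : x + f w + φ w • e ∈ frontier Ω ∩
      {y | ∃ v t, ‖v‖ < s ∧ |t| < (1 + M) * s ∧ y = x + f v + t • e} := by
    rw [hchart]
    exact ⟨w, φ w, hw, hφw, rfl, rfl⟩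
  exact this.1

theorem exists_eq_add_add_smul_of_mem_frontier (he : ‖e‖ = 1) (horth : ∀ v, ⟪f v, e⟫ = 0)
    (hspan : ∀ y, ∃ (v : F) (t : ℝ), y = f v + t • e) (hM : 0 ≤ M)
    (hchart : FrontierIsGraphOnCylinder Ω M s x f e φ)
    {q : E} (hq : q ∈ frontier Ω) (hxq : dist x q < s) :
    ∃ v, ‖v‖ ≤ dist x q ∧ q = x + f v + φ v • e := by
  have hnorm : ∀ v (t : ℝ), q = x + f v + t • e → ‖f v + t • e‖ = dist x q := by
    rintro v t rfl
    rw [add_assoc, dist_self_add_right]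
  obtain ⟨v, t, hvt⟩ := hspan (q - x)
  have hq' : q = x + f v + t • e := by rw [add_assoc, ← hvt]; abel
  have hmem : q ∈ frontier Ω ∩
      {y | ∃ v t, ‖v‖ < s ∧ |t| < (1 + M) * s ∧ y = x + f v + t • e} := by
    refine ⟨hq, v, t, ?_, ?_, hq'⟩
    · exact (f.norm_le_norm_add_smul he horth v t).trans_lt (hnorm v t hq' ▸ hxq)
    · have := (f.abs_le_norm_add_smul he horth v t).trans_lt (hnorm v t hq' ▸ hxq)
      nlinarith [abs_nonneg t]
  rw [hchart] at hmem
  obtain ⟨v', t', -, -, rfl, hq''⟩ := hmem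
  exact ⟨v', hnorm v' _ hq'' ▸ f.norm_le_norm_add_smul he horth v' _, hq''⟩

theorem exists_mem_closure_inter_diff_dist_le (he : ‖e‖ = 1) (horth : ∀ v, ⟪f v, e⟫ = 0)
    (hspan : ∀ y, ∃ (v : F) (t : ℝ), y = f v + t • e) (hM : 0 ≤ M)
    (hφ : LipschitzWith M.toNNReal φ) (hφ0 : φ 0 = 0)
    (hchart : FrontierIsGraphOnCylinder Ω M s x f e φ)
    {U : Set E} (hU : IsOpen U) (hx : x ∈ U) {q : E} (hq : q ∈ frontier Ω \ U)
    (hxq : dist x q < s) :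
    ∃ z ∈ closure (U ∩ frontier Ω) ∩ (frontier Ω \ U), dist x z ≤ (1 + M) * dist x q := by
  have hφle : ∀ w, |φ w| ≤ M * ‖w‖ := fun w => by
    simpa [hφ0, Real.coe_toNNReal M hM] using hφ.dist_le_mul w 0
  obtain ⟨v, hv, hqv⟩ :=
    exists_eq_add_add_smul_of_mem_frontier he horth hspan hM hchart hq.1 hxq
  let γ : unitInterval → E := fun u => x + f ((u : ℝ) • v) + φ ((u : ℝ) • v) • e
  have hγ : Continuous γ := by
    have := hφ.continuous
    fun_prop
  have hsegment : ∀ u : unitInterval, ‖(u : ℝ) • v‖ ≤ ‖v‖ := fun u => by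
    rw [norm_smul, Real.norm_eq_abs, abs_of_nonneg u.2.1]
    exact mul_le_of_le_one_left (norm_nonneg v) u.2.2
  have hγΩ : ∀ u, γ u ∈ frontier Ω := fun u =>
    add_add_smul_mem_frontier hM hφle hchart ((hsegment u).trans_lt (hv.trans_lt hxq))
  have hγ0 : γ 0 ∈ U := by simpa [γ, hφ0] using hx
  have hγ1 : γ 1 ∉ U := by simpa [γ, ← hqv] using hq.2
  obtain ⟨u, hu⟩ := exists_apply_mem_closure_inter_diff hγ hU hγΩ hγ0 hγ1
  refine ⟨γ u, hu, ?_⟩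
  calc dist x (γ u) = ‖f ((u : ℝ) • v) + φ ((u : ℝ) • v) • e‖ := by
        simp only [γ, add_assoc, dist_self_add_right]
    _ ≤ ‖(u : ℝ) • v‖ + M * ‖(u : ℝ) • v‖ := by
        refine (norm_add_le _ _).trans (add_le_add (f.norm_map _).le ?_)
        rw [norm_smul, he, mul_one, Real.norm_eq_abs]
        exact hφle _
    _ ≤ (1 + M) * dist x q := by nlinarith [hsegment u, norm_nonneg ((u : ℝ) • v)]

end LipschitzChart

theorem IsLipschitzDomain.exists_mem_relBoundary_dist_lt {n : ℕ} {M r₀ : ℝ}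
    {Ω U D Λ : Set (EuclideanSpace ℝ (Fin n))} (hΩ : IsLipschitzDomain n M r₀ Ω)
    (hU : IsOpen U) (hD : D = U ∩ frontier Ω) (hΛ : Λ = closure D ∩ (frontier Ω \ D))
    {p : EuclideanSpace ℝ (Fin n)} (hp : p ∈ D) {ρ : ℝ} (hρ : ρ ≤ r₀)
    (hball : ¬ ball p ρ ∩ frontier Ω ⊆ D) : ∃ z ∈ Λ, dist p z < (1 + M) * ρ := by
  obtain ⟨-, -, -, hM, hr₀, hcharts⟩ := hΩ
  subst hD hΛ
  obtain ⟨f, e, φ, he, horth, hφ, hφ0, hchart⟩ := hcharts p hp.2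
  have hr₀_le : r₀ ≤ 100 * r₀ * √(1 + M ^ 2) := by
    nlinarith [Real.one_le_sqrt.2 (by nlinarith : (1 : ℝ) ≤ 1 + M ^ 2)]
  have hspan := f.exists_eq_add_smul he horth (by simp; omega)
  obtain ⟨q, ⟨hqρ, hqΩ⟩, hqD⟩ := not_subset.1 hball
  have hpq : dist p q < ρ := by rw [dist_comm]; exact hqρ
  obtain ⟨z, ⟨hz_cl, hzΩ, hzU⟩, hz⟩ := exists_mem_closure_inter_diff_dist_le he horth hspan
    hM.le hφ hφ0 (hchart r₀ hr₀ hr₀_le).2 hU hp.1 ⟨hqΩ, fun hqU => hqD ⟨hqU, hqΩ⟩⟩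
    (hpq.trans_le hρ)
  exact ⟨z, ⟨hz_cl, hzΩ, fun hzD => hzU hzD.1⟩,
    hz.trans_lt (mul_lt_mul_of_pos_left hpq (by linarith))⟩

theorem statement4_general (n : ℕ) (M : ℝ) :
    ∃ c > 0, ∀ (r₀ : ℝ) (Ω D Λ : Set (EuclideanSpace ℝ (Fin n))),
      IsLipschitzDomain n M r₀ Ω →
      (∃ U, IsOpen U ∧ D = U ∩ frontier Ω) →
      Λ = closure D ∩ (frontier Ω \ D) →
      Corkscrew n M r₀ D Λ →
      ∀ x ∈ D, ∀ r : ℝ, 0 < r → r < r₀ →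
        ∃ xD ∈ D, dist x xD ≤ r ∧ Metric.ball xD (c * r) ∩ frontier Ω ⊆ D := by
  refine ⟨(2 * (1 + |M|) ^ 2)⁻¹, by positivity, ?_⟩
  rintro r₀ Ω D Λ hΩ ⟨U, hU, hD⟩ hΛ hcork x hx r hr hrr₀
  have hM : 0 < M := hΩ.2.2.2.1
  rw [abs_of_pos hM]
  set c := (2 * (1 + M) ^ 2)⁻¹ with hc_def
  have hc : (1 + M) * c * r = r / (2 * (1 + M)) := by
    rw [hc_def]; field_simp
  have hcr : (1 + M) * c * r ≤ r / 2 := by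
    rw [hc]; exact div_le_div_of_nonneg_left hr.le two_pos (by linarith)
  have hcr' : (1 + M) * c * r < M⁻¹ * (r / 2) := by
    rw [hc, inv_mul_eq_div, div_div,
      div_lt_div_iff_of_pos_left hr (by positivity) (by positivity)]
    linarith
  have hcr₀ : c * r ≤ r₀ := by nlinarith
  by_cases hx_ball : ball x (c * r) ∩ frontier Ω ⊆ D
  · exact ⟨x, hx, by simpa using hr.le, hx_ball⟩
  obtain ⟨z, hzΛ, hxz⟩ := hΩ.exists_mem_relBoundary_dist_lt hU hD hΛ hx hcr₀ hx_ball
  obtain ⟨xD, hxD, hzxD, hδ⟩ := hcork z hzΛ (r / 2) (by positivity) (by linarith)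
  refine ⟨xD, hxD, by linarith [dist_triangle x z xD], ?_⟩
  by_contra hxD_ball
  obtain ⟨z', hz'Λ, hxDz'⟩ := hΩ.exists_mem_relBoundary_dist_lt hU hD hΛ hxD hcr₀ hxD_ball
  linarith [infDist_le_dist_of_mem (x := xD) hz'Λ]

/-- Lemma 2.3, first part: near every point of `D` there is a point
`x_D ∈ D` whose surface ball of comparable radius is contained in `D`. -/
theorem statement4 (n : ℕ) (hn : 2 ≤ n) (M : ℝ) :
    ∃ c > 0, ∀ (r₀ : ℝ) (Ω D Λ : Set (EuclideanSpace ℝ (Fin n))),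
      IsLipschitzDomain n M r₀ Ω →
      (∃ U, IsOpen U ∧ D = U ∩ frontier Ω) →
      Λ = closure D ∩ (frontier Ω \ D) →
      Corkscrew n M r₀ D Λ →
      ∀ x ∈ D, ∀ r : ℝ, 0 < r → r < r₀ →
        ∃ xD ∈ D, dist x xD ≤ r ∧ Metric.ball xD (c * r) ∩ frontier Ω ⊆ D :=
  statement4_general n M
end
end

section
/- Let Ω ⊆ ℝⁿ (n ≥ 2) be a bounded Lipschitz domain with constant M and scale r₀, let D be a relatively open subset of ∂Ω with relative boundary Λ, δ(y) = dist(y, Λ), and assume D satisfies the corkscrew condition. Then there is a constant c > 0, depending only on n and M, such that for every x ∈ D and every 0 < r < r₀, σ(Δ_r(x) ∩ D) ≥ c·r^{n−1}, where σ is (n−1)-dimensional Hausdorff measure restricted to ∂Ω. -/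
open MeasureTheory Metric Set
open scoped RealInnerProductSpace ENNReal NNReal

noncomputable section

/-!
Move from `x` to a point `p ∈ D` at distance `≳ r / max 1 M` from `Λ`: `x` itself if `Λ` is far
from `x`, otherwise a corkscrew point of a nearby point of `Λ`. Around `p` the boundary is the
graph of an `M`-Lipschitz function over an `(n-1)`-ball of radius `u ≈ r / max 1 M²`. This graph
patch is connected, lies in `∂Ω ∩ B_r(x)` and misses `Λ`, so it lies in `D`. Since the graph map
does not decrease distances, the patch has measure at least that of the ball, `≈ u^{n-1}`.
-/

theorem IsPreconnected.subset_of_disjoint_relBoundary {X : Type*} [TopologicalSpace X]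
    {S U F D Λ : Set X} (hS : IsPreconnected S) (hU : IsOpen U) (hD : D = U ∩ F)
    (hΛ : Λ = closure D ∩ (F \ D)) (hSF : S ⊆ F) (hSΛ : Disjoint S Λ) (hSD : (S ∩ D).Nonempty) :
    S ⊆ D := by
  subst hD hΛ
  have hcl : ∀ s ∈ S, s ∈ closure (U ∩ F) → s ∈ U := fun s hs hc => by
    by_contra hsU
    exact hSΛ.ne_of_mem hs ⟨hc, hSF hs, fun h => hsU h.1⟩ rfl
  suffices hSU : S ⊆ U from fun s hs => ⟨hSU hs, hSF hs⟩
  intro s hs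
  by_contra hsU
  obtain ⟨t, htS, htU, htcl⟩ := hS U (closure (U ∩ F))ᶜ hU isClosed_closure.isOpen_compl
    (fun s hs => or_iff_not_imp_right.2 fun h => hcl s hs (not_not.1 h))
    (hSD.mono fun _ h => ⟨h.1, h.2.1⟩) ⟨s, hs, fun hc => hsU (hcl s hs hc)⟩
  exact htcl (subset_closure ⟨htU, hSF htS⟩)

theorem Corkscrew.exists_ball_subset_ball_disjoint {n : ℕ} {M r₀ : ℝ}
    {D Λ : Set (EuclideanSpace ℝ (Fin n))} (h : Corkscrew n M r₀ D Λ) (hM : 0 < M)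
    {x : EuclideanSpace ℝ (Fin n)} (hx : x ∈ D) {r : ℝ} (hr : 0 < r) (hrr₀ : r < r₀) :
    ∃ p ∈ D, ball p (r / (4 * max 1 M)) ⊆ ball x r ∧ Disjoint (ball p (r / (4 * max 1 M))) Λ := by
  have hρ : r / (4 * max 1 M) ≤ r / 4 :=
    div_le_div_of_nonneg_left hr.le (by norm_num) (by linarith [le_max_left 1 M])
  by_cases hnear : ∃ z ∈ Λ, dist x z < r / 2
  · obtain ⟨z, hzΛ, hxz⟩ := hnear
    obtain ⟨p, hpD, hzp, hpΛ⟩ := h z hzΛ (r / 4) (by positivity) (by linarith)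
    have hρM : r / (4 * max 1 M) ≤ M⁻¹ * (r / 4) := by
      rw [inv_mul_eq_div, div_div]
      exact div_le_div_of_nonneg_left hr.le (by positivity) (by gcongr; exact le_max_right 1 M)
    refine ⟨p, hpD, ball_subset_ball' ?_,
      disjoint_ball_infDist.mono_left (ball_subset_ball (hρM.trans hpΛ.le))⟩
    linarith [dist_triangle p z x, dist_comm p z, dist_comm z x]
  · push Not at hnear
    refine ⟨x, hx, ball_subset_ball (by linarith), disjoint_left.2 fun y hy hyΛ => ?_⟩
    linarith [hnear y hyΛ, mem_ball'.1 hy]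

theorem abs_le_mul_norm_of_lipschitzWith {E' : Type*} [SeminormedAddCommGroup E'] {φ : E' → ℝ}
    {M : ℝ} (hM : 0 ≤ M) (hφ : LipschitzWith M.toNNReal φ) (hφ0 : φ 0 = 0) (v : E') :
    |φ v| ≤ M * ‖v‖ := by
  simpa [Real.coe_toNNReal M hM] using hφ.norm_le_mul hφ0 v

section Graph

variable {E' E : Type*} [NormedAddCommGroup E'] [InnerProductSpace ℝ E']
  [NormedAddCommGroup E] [InnerProductSpace ℝ E]

def graphMap (p : E) (f : E' →ₗᵢ[ℝ] E) (e : E) (φ : E' → ℝ) (v : E') : E := p + f v + φ v • e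

variable {p e : E} {f : E' →ₗᵢ[ℝ] E} {φ : E' → ℝ}

theorem graphMap_zero (hφ0 : φ 0 = 0) : graphMap p f e φ 0 = p := by
  simp [graphMap, hφ0]

theorem continuous_graphMap (hφ : Continuous φ) : Continuous (graphMap p f e φ) :=
  (continuous_const.add f.continuous).add (hφ.smul continuous_const)

theorem antilipschitzWith_graphMap (horth : ∀ v, ⟪f v, e⟫ = 0) :
    AntilipschitzWith 1 (graphMap p f e φ) := by
  refine AntilipschitzWith.of_le_mul_dist fun v w => ?_
  have hsub : graphMap p f e φ v - graphMap p f e φ w = f (v - w) + (φ v - φ w) • e := by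
    simp only [graphMap, map_sub, sub_smul]
    abel
  have hpyth := norm_add_sq_eq_norm_sq_add_norm_sq_real (x := f (v - w)) (y := (φ v - φ w) • e)
    (by rw [inner_smul_right, horth, mul_zero])
  rw [NNReal.coe_one, one_mul, dist_eq_norm, dist_eq_norm, hsub,
    mul_self_le_mul_self_iff (norm_nonneg _) (norm_nonneg _), hpyth, f.norm_map]
  exact le_add_of_nonneg_right (mul_self_nonneg _)

theorem graphMap_image_ball_subset_ball {M : ℝ} (hM : 0 ≤ M) (he : ‖e‖ = 1)
    (hφ : LipschitzWith M.toNNReal φ) (hφ0 : φ 0 = 0) (u : ℝ) :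
    graphMap p f e φ '' ball 0 u ⊆ ball p ((1 + M) * u) := by
  rintro _ ⟨v, hv, rfl⟩
  rw [mem_ball_zero_iff] at hv
  have hφv := abs_le_mul_norm_of_lipschitzWith hM hφ hφ0 v
  rw [mem_ball, dist_eq_norm, graphMap, add_sub_right_comm, add_sub_cancel_left]
  calc ‖f v + φ v • e‖ ≤ ‖v‖ + |φ v| := by
        simpa [norm_smul, he] using norm_add_le (f v) (φ v • e)
    _ < (1 + M) * u := by nlinarith [norm_nonneg v]

theorem graphMap_image_ball_subset_of_inter_cylinder_eq {F : Set E} {M u : ℝ} (hM : 0 ≤ M)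
    (hφ : LipschitzWith M.toNNReal φ) (hφ0 : φ 0 = 0)
    (hF : F ∩ {y | ∃ v t, ‖v‖ < u ∧ |t| < (1 + M) * u ∧ y = p + f v + t • e}
      = {y | ∃ v t, ‖v‖ < u ∧ |t| < (1 + M) * u ∧ φ v = t ∧ y = p + f v + t • e}) :
    graphMap p f e φ '' ball 0 u ⊆ F := by
  rintro _ ⟨v, hv, rfl⟩
  rw [mem_ball_zero_iff] at hv
  have hφv := abs_le_mul_norm_of_lipschitzWith hM hφ hφ0 v
  have hmem : graphMap p f e φ v ∈
      {y | ∃ v t, ‖v‖ < u ∧ |t| < (1 + M) * u ∧ φ v = t ∧ y = p + f v + t • e} :=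
    ⟨v, φ v, hv, by nlinarith [norm_nonneg v], rfl, rfl⟩
  exact (hF ▸ hmem).1

theorem graphMap_image_ball_subset_ball_inter {F U D Λ : Set E} {M u : ℝ} (hU : IsOpen U)
    (hD : D = U ∩ F) (hΛ : Λ = closure D ∩ (F \ D)) (hM : 0 ≤ M) (he : ‖e‖ = 1)
    (hφ : LipschitzWith M.toNNReal φ) (hφ0 : φ 0 = 0)
    (hF : F ∩ {y | ∃ v t, ‖v‖ < u ∧ |t| < (1 + M) * u ∧ y = p + f v + t • e}
      = {y | ∃ v t, ‖v‖ < u ∧ |t| < (1 + M) * u ∧ φ v = t ∧ y = p + f v + t • e})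
    (hu : 0 < u) (hpD : p ∈ D) (hpΛ : Disjoint (ball p ((1 + M) * u)) Λ) :
    graphMap p f e φ '' ball 0 u ⊆ ball p ((1 + M) * u) ∩ D := by
  have hball := graphMap_image_ball_subset_ball (p := p) (f := f) hM he hφ hφ0 u
  refine subset_inter hball <|
    (isPreconnected_ball.image _ (continuous_graphMap hφ.continuous).continuousOn)
      |>.subset_of_disjoint_relBoundary hU hD hΛ
        (graphMap_image_ball_subset_of_inter_cylinder_eq hM hφ hφ0 hF) (hpΛ.mono_left hball)
        ⟨p, ⟨0, mem_ball_self hu, graphMap_zero hφ0⟩, hpD⟩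

end Graph

theorem ofReal_pow_mul_le_hausdorffMeasure_image {X : Type*} [EMetricSpace X] [MeasurableSpace X]
    [BorelSpace X] {m : ℕ} {g : EuclideanSpace ℝ (Fin m) → X} (hg : AntilipschitzWith 1 g)
    (x : EuclideanSpace ℝ (Fin m)) {u : ℝ} (hu : 0 < u) :
    ENNReal.ofReal (u ^ m) * μH[(m : ℝ)] (ball (0 : EuclideanSpace ℝ (Fin m)) 1)
      ≤ μH[(m : ℝ)] (g '' ball x u) := by
  have hball := Measure.addHaar_ball_of_pos (μH[(m : ℝ)] : Measure (EuclideanSpace ℝ (Fin m))) x hu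
  rw [finrank_euclideanSpace_fin] at hball
  simpa [← hball] using hg.le_hausdorffMeasure_image (Nat.cast_nonneg m) (ball x u)

theorem IsLipschitzDomain.exists_antilipschitz_image_ball_subset {n : ℕ} {M r₀ : ℝ}
    {Ω U D Λ : Set (EuclideanSpace ℝ (Fin n))} (hΩ : IsLipschitzDomain n M r₀ Ω) (hU : IsOpen U)
    (hD : D = U ∩ frontier Ω) (hΛ : Λ = closure D ∩ (frontier Ω \ D))
    {p : EuclideanSpace ℝ (Fin n)} (hpD : p ∈ D) {ρ : ℝ} (hρ : 0 < ρ) (hρr₀ : ρ < r₀)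
    (hpΛ : Disjoint (ball p ρ) Λ) :
    ∃ g : EuclideanSpace ℝ (Fin (n - 1)) → EuclideanSpace ℝ (Fin n),
      AntilipschitzWith 1 g ∧ g '' ball 0 (ρ / (2 * max 1 M)) ⊆ ball p ρ ∩ D := by
  obtain ⟨-, -, -, hM, -, hchart⟩ := hΩ
  obtain ⟨f, e, φ, he, horth, hφ, hφ0, hch⟩ := hchart p (hD ▸ hpD).2
  have hL : 1 ≤ max 1 M := le_max_left 1 M
  set u := ρ / (2 * max 1 M)
  have hu : 0 < u := by positivity
  have hu₀ : u ≤ 100 * r₀ * √(1 + M ^ 2) := by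
    have : 1 ≤ √(1 + M ^ 2) := Real.one_le_sqrt.2 (by nlinarith)
    have : u ≤ ρ := div_le_self hρ.le (by linarith)
    nlinarith
  have hball : ball p ((1 + M) * u) ⊆ ball p ρ := ball_subset_ball <| by
    calc (1 + M) * u ≤ 2 * max 1 M * u := by gcongr; linarith [le_max_right 1 M]
      _ = ρ := by simp only [u]; field_simp
  refine ⟨graphMap p f e φ, antilipschitzWith_graphMap horth, ?_⟩
  exact (graphMap_image_ball_subset_ball_inter hU hD hΛ hM.le he hφ hφ0 (hch u hu hu₀).2 hu hpD
    (hpΛ.mono_left hball)).trans (inter_subset_inter_left D hball)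

/-- Lemma 2.3, estimate (2.4): `σ(Δ_r(x) ∩ D) ≥ c r^{n-1}` for `x ∈ D`. -/
theorem statement5 (n : ℕ) (hn : 2 ≤ n) (M : ℝ) :
    ∃ c > 0, ∀ (r₀ : ℝ) (Ω D Λ : Set (EuclideanSpace ℝ (Fin n))),
      IsLipschitzDomain n M r₀ Ω →
      (∃ U, IsOpen U ∧ D = U ∩ frontier Ω) →
      Λ = closure D ∩ (frontier Ω \ D) →
      Corkscrew n M r₀ D Λ →
      ∀ x ∈ D, ∀ r : ℝ, 0 < r → r < r₀ →
        ENNReal.ofReal (c * r ^ ((n : ℝ) - 1))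
          ≤ μH[(n : ℝ) - 1] (Metric.ball x r ∩ frontier Ω ∩ D) := by
  have hdim : ((n - 1 : ℕ) : ℝ) = (n : ℝ) - 1 := by rw [Nat.cast_sub (by omega), Nat.cast_one]
  set μ₁ := μH[((n - 1 : ℕ) : ℝ)] (ball (0 : EuclideanSpace ℝ (Fin (n - 1))) 1)
  have hμ₁ : μ₁ ≠ ⊤ := measure_ball_lt_top.ne
  have hL : 1 ≤ max 1 M := le_max_left 1 M
  refine ⟨μ₁.toReal / (8 * max 1 M ^ 2) ^ (n - 1),
    div_pos (ENNReal.toReal_pos (measure_ball_pos _ _ one_pos).ne' hμ₁) (by positivity), ?_⟩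
  rintro r₀ Ω D Λ hΩ ⟨U, hU, hD⟩ hΛ hcork x hx r hr hrr₀
  have hM : 0 < M := hΩ.2.2.2.1
  obtain ⟨p, hpD, hpx, hpΛ⟩ := hcork.exists_ball_subset_ball_disjoint hM hx hr hrr₀
  obtain ⟨g, hg, hgD⟩ := hΩ.exists_antilipschitz_image_ball_subset hU hD hΛ hpD (by positivity)
    ((div_le_self hr.le (by linarith)).trans_lt hrr₀) hpΛ
  calc ENNReal.ofReal (μ₁.toReal / (8 * max 1 M ^ 2) ^ (n - 1) * r ^ ((n : ℝ) - 1))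
      = ENNReal.ofReal ((r / (4 * max 1 M) / (2 * max 1 M)) ^ (n - 1)) * μ₁ := by
        conv_rhs => rw [← ENNReal.ofReal_toReal hμ₁, ← ENNReal.ofReal_mul (by positivity)]
        rw [← hdim, Real.rpow_natCast, div_div, div_pow]
        ring_nf
    _ ≤ μH[((n - 1 : ℕ) : ℝ)] (g '' ball 0 (r / (4 * max 1 M) / (2 * max 1 M))) :=
        ofReal_pow_mul_le_hausdorffMeasure_image hg 0 (by positivity)
    _ ≤ μH[(n : ℝ) - 1] (ball x r ∩ frontier Ω ∩ D) := by
        rw [← hdim]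
        refine measure_mono fun y hy => ?_
        obtain ⟨hyp, hyD⟩ := hgD hy
        exact ⟨⟨hpx hyp, (hD ▸ hyD).2⟩, hyD⟩
end
end

section
/- Let Ω ⊆ ℝⁿ (n ≥ 2) be a bounded Lipschitz domain with constant M and scale r₀, let D be a relatively open subset of ∂Ω with relative boundary Λ, δ(y) = dist(y, Λ), and assume Λ is Ahlfors (n−2+ε)-regular with constant M at scales below r₀, where ε ≥ 0. Then there is a constant C > 0, depending only on n, M, ε, r₀ and the diameter of Ω, such that for every 0 < t < r₀ the Lebesgue measure of the set C_t = {y ∈ Ω : t < δ(y) < 2t} is at most C·t^{2−ε}. -/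
/-! Let `d = n - 2 + ε`. A Vitali subfamily of the balls of radius `t/2` centred on `Λ` is
disjoint, and the balls of radius `2t` around its centres cover `Λ`. Ahlfors regularity gives
each disjoint ball `H^d`-mass at least `M⁻¹ (t/2)^d`, while `H^d(Λ) < ∞` because `Λ` is
compact, so there are `O(t^{-d})` centres. The set `C_t` lies in the `2t`-neighbourhood of
`Λ`, hence in the union of the concentric `4t`-balls, of total volume
`O(t^{-d} t^n) = O(t^{2-ε})`. -/

open MeasureTheory Metric Set
open scoped RealInnerProductSpace ENNReal NNReal

noncomputable section

namespace AhlforsRegular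

variable {n : ℕ} {d M r₀ r : ℝ} {Λ : Set (EuclideanSpace ℝ (Fin n))}

theorem hausdorffMeasure_ne_top (hA : AhlforsRegular n d M r₀ Λ) (hr₀ : 0 < r₀)
    (hΛ : IsCompact Λ) : μH[d] Λ ≠ ∞ := by
  obtain ⟨s, hsΛ, hs⟩ := hΛ.elim_nhds_subcover (fun x => ball x (r₀ / 2))
    (fun x _ => ball_mem_nhds x (half_pos hr₀))
  have hcover : Λ ⊆ ⋃ x ∈ s, ball x (r₀ / 2) ∩ Λ := by
    rw [← iUnion₂_inter]; exact subset_inter hs subset_rfl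
  refine ne_top_of_le_ne_top ?_ ((measure_mono hcover).trans (measure_biUnion_finset_le _ _))
  exact ENNReal.sum_ne_top.2 fun x hx => ne_top_of_le_ne_top ENNReal.ofReal_ne_top
    (hA x (hsΛ x hx) (r₀ / 2) (half_pos hr₀) (half_lt_self hr₀)).2

theorem card_mul_le_hausdorffMeasure_s9 (hA : AhlforsRegular n d M r₀ Λ) (hΛ : IsClosed Λ)
    (hr : 0 < r) (hr₀ : r < r₀) {s : Finset (EuclideanSpace ℝ (Fin n))} (hsΛ : ↑s ⊆ Λ)
    (hs : (s : Set (EuclideanSpace ℝ (Fin n))).PairwiseDisjoint fun b => closedBall b r) :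
    s.card * ENNReal.ofReal (M⁻¹ * r ^ d) ≤ μH[d] Λ :=
  calc s.card * ENNReal.ofReal (M⁻¹ * r ^ d)
      = ∑ b ∈ s, ENNReal.ofReal (M⁻¹ * r ^ d) := by rw [Finset.sum_const, nsmul_eq_mul]
    _ ≤ ∑ b ∈ s, μH[d] (ball b r ∩ Λ) :=
        Finset.sum_le_sum fun b hb => (hA b (hsΛ hb) r hr hr₀).1
    _ = μH[d] (⋃ b ∈ s, ball b r ∩ Λ) :=
        (measure_biUnion_finset (hs.mono fun b => inter_subset_left.trans ball_subset_closedBall)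
          fun b _ => measurableSet_ball.inter hΛ.measurableSet).symm
    _ ≤ μH[d] Λ := measure_mono (iUnion₂_subset fun _ _ => inter_subset_right)

theorem exists_finset_covering (hA : AhlforsRegular n d M r₀ Λ) (hM : 0 < M) (hΛ : IsCompact Λ)
    (hr : 0 < r) (hr₀ : r < r₀) :
    ∃ s : Finset (EuclideanSpace ℝ (Fin n)),
      s.card * r ^ d ≤ M * (μH[d] Λ).toReal ∧ Λ ⊆ ⋃ b ∈ s, closedBall b (4 * r) := by
  obtain ⟨u, huΛ, hu, hcov⟩ := Vitali.exists_disjoint_subfamily_covering_enlargement_closedBall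
    Λ id (fun _ => r) r (fun _ _ => le_rfl) 4 (by norm_num)
  have hcard {s : Finset (EuclideanSpace ℝ (Fin n))} (hsu : ↑s ⊆ u) :=
    hA.card_mul_le_hausdorffMeasure_s9 hΛ.isClosed hr hr₀ (hsu.trans huΛ) (hu.subset hsu)
  have hfinite := hA.hausdorffMeasure_ne_top (hr.trans hr₀) hΛ
  have hfin : u.Finite := by
    by_contra hinf
    obtain ⟨N, hN⟩ := ENNReal.exists_nat_mul_gt
      (ENNReal.ofReal_pos.2 (by positivity : 0 < M⁻¹ * r ^ d)).ne' hfinite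
    obtain ⟨s, hsu, rfl⟩ := Set.Infinite.exists_subset_card_eq hinf N
    exact (hcard hsu).not_gt hN
  refine ⟨hfin.toFinset, ?_, fun a ha => ?_⟩
  · have h := ENNReal.toReal_mono hfinite (hcard hfin.coe_toFinset.subset)
    rw [ENNReal.toReal_mul, ENNReal.toReal_ofReal (by positivity), ENNReal.toReal_natCast] at h
    calc _ = M * (hfin.toFinset.card * (M⁻¹ * r ^ d)) := by field_simp
      _ ≤ M * (μH[d] Λ).toReal := by gcongr
  · obtain ⟨b, hb, hab⟩ := hcov a ha
    exact mem_iUnion₂.2 ⟨b, hfin.mem_toFinset.2 hb, hab (mem_closedBall_self hr.le)⟩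

theorem exists_volume_thickening_le (hA : AhlforsRegular n d M r₀ Λ) (hM : 0 < M)
    (hΛ : IsCompact Λ) :
    ∃ C > 0, ∀ t : ℝ, 0 < t → t < r₀ →
      volume (thickening (2 * t) Λ) ≤ ENNReal.ofReal (C * t ^ ((n : ℝ) - d)) := by
  set K := (μH[d] Λ).toReal
  set ω := (volume (ball (0 : EuclideanSpace ℝ (Fin n)) 1)).toReal
  have hball (b : EuclideanSpace ℝ (Fin n)) {ρ : ℝ} (hρ : 0 < ρ) :
      volume (ball b ρ) = ENNReal.ofReal (ω * ρ ^ n) := by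
    rw [Measure.addHaar_ball_of_pos _ _ hρ, finrank_euclideanSpace_fin, mul_comm,
      ENNReal.ofReal_mul ENNReal.toReal_nonneg, ENNReal.ofReal_toReal measure_ball_lt_top.ne]
  refine ⟨M * K * 2 ^ d * 4 ^ n * ω + 1, by positivity, fun t ht htr₀ => ?_⟩
  obtain ⟨s, hcard, hcov⟩ :=
    hA.exists_finset_covering hM hΛ (half_pos ht) ((half_lt_self ht).trans htr₀)
  have hsub : thickening (2 * t) Λ ⊆ ⋃ b ∈ s, ball b (4 * t) := by
    refine (thickening_subset_of_subset _ hcov).trans_eq ?_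
    simp only [thickening_iUnion, thickening_closedBall (by positivity : 0 < 2 * t)
      (by positivity : 0 ≤ 4 * (t / 2))]
    ring_nf
  have hpow : (4 * t) ^ n = (t / 2) ^ d * (2 ^ d * 4 ^ n * t ^ ((n : ℝ) - d)) := by
    rw [Real.div_rpow ht.le zero_le_two, mul_pow, ← Real.rpow_natCast t n,
      ← add_sub_cancel d (n : ℝ), Real.rpow_add ht, add_sub_cancel_left]
    field_simp
  calc volume (thickening (2 * t) Λ)
      ≤ ∑ b ∈ s, volume (ball b (4 * t)) :=
        (measure_mono hsub).trans (measure_biUnion_finset_le _ _)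
    _ = ENNReal.ofReal (s.card * (ω * (4 * t) ^ n)) := by
        rw [Finset.sum_congr rfl fun b _ => hball b (by positivity), Finset.sum_const,
          nsmul_eq_mul, ENNReal.ofReal_mul (Nat.cast_nonneg _), ENNReal.ofReal_natCast]
    _ ≤ ENNReal.ofReal ((M * K * 2 ^ d * 4 ^ n * ω + 1) * t ^ ((n : ℝ) - d)) := by
      refine ENNReal.ofReal_le_ofReal ?_
      have hpos : 0 ≤ ω * 2 ^ d * 4 ^ n * t ^ ((n : ℝ) - d) := by positivity
      calc (s.card : ℝ) * (ω * (4 * t) ^ n)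
          = s.card * (t / 2) ^ d * (ω * 2 ^ d * 4 ^ n * t ^ ((n : ℝ) - d)) := by
            rw [hpow]; ring
        _ ≤ M * K * (ω * 2 ^ d * 4 ^ n * t ^ ((n : ℝ) - d)) := by gcongr
        _ ≤ (M * K * 2 ^ d * 4 ^ n * ω + 1) * t ^ ((n : ℝ) - d) := by
            nlinarith [Real.rpow_nonneg ht.le ((n : ℝ) - d)]

end AhlforsRegular

theorem isCompact_closure_inter_frontier_diff {X : Type*} [MetricSpace X] [ProperSpace X]
    {Ω D : Set X} (hΩ : Bornology.IsBounded Ω) (hD : ∃ U, IsOpen U ∧ D = U ∩ frontier Ω) :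
    IsCompact (closure D ∩ (frontier Ω \ D)) := by
  obtain ⟨U, hU, rfl⟩ := hD
  refine Metric.isCompact_of_isClosed_isBounded ?_ ?_
  · rw [sdiff_inter_self_eq_sdiff]
    exact isClosed_closure.inter (isClosed_frontier.sdiff hU)
  · exact hΩ.closure.subset
      (inter_subset_right.trans (sdiff_subset.trans frontier_subset_closure))

theorem statement9_general (n : ℕ) (M r₀ ε : ℝ)
    (Ω D Λ : Set (EuclideanSpace ℝ (Fin n)))
    (hΩ : IsLipschitzDomain n M r₀ Ω)
    (hD : ∃ U, IsOpen U ∧ D = U ∩ frontier Ω)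
    (hΛ : Λ = closure D ∩ (frontier Ω \ D))
    (hA : AhlforsRegular n ((n : ℝ) - 2 + ε) M r₀ Λ) :
    ∃ C > 0, ∀ t : ℝ, 0 < t → t < r₀ →
      volume {y ∈ Ω | t < Metric.infDist y Λ ∧ Metric.infDist y Λ < 2 * t}
        ≤ ENNReal.ofReal (C * t ^ (2 - ε)) := by
  obtain ⟨-, -, hΩb, hM, -⟩ := hΩ
  have hΛc : IsCompact Λ := hΛ ▸ isCompact_closure_inter_frontier_diff hΩb hD
  obtain ⟨C, hC, hvol⟩ := hA.exists_volume_thickening_le hM hΛc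
  have hexp : (n : ℝ) - ((n : ℝ) - 2 + ε) = 2 - ε := by ring
  refine ⟨C, hC, fun t ht htr₀ => le_trans (measure_mono ?_) (hexp ▸ hvol t ht htr₀)⟩
  rintro y ⟨-, hty, hy2t⟩
  rcases Λ.eq_empty_or_nonempty with rfl | hne
  · rw [infDist_empty] at hty; linarith
  · exact (mem_thickening_iff_infDist_lt hne).2 hy2t

/-- `|C_t| ≤ C t^{2-ε}` where `C_t = {y ∈ Ω : t < δ(y) < 2t}`. -/
theorem statement9 (n : ℕ) (hn : 2 ≤ n) (M r₀ ε : ℝ) (hε : 0 ≤ ε)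
    (Ω D Λ : Set (EuclideanSpace ℝ (Fin n)))
    (hΩ : IsLipschitzDomain n M r₀ Ω)
    (hD : ∃ U, IsOpen U ∧ D = U ∩ frontier Ω)
    (hΛ : Λ = closure D ∩ (frontier Ω \ D))
    (hA : AhlforsRegular n ((n : ℝ) - 2 + ε) M r₀ Λ) :
    ∃ C > 0, ∀ t : ℝ, 0 < t → t < r₀ →
      volume {y ∈ Ω | t < Metric.infDist y Λ ∧ Metric.infDist y Λ < 2 * t}
        ≤ ENNReal.ofReal (C * t ^ (2 - ε)) :=
  statement9_general n M r₀ ε Ω D Λ hΩ hD hΛ hA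
end
end

section
/- Let (X, 𝒜, ν) be a measure space, let Δ ∈ 𝒜 with 0 < ν(Δ) < ∞, and let μ : X → [0, ∞) be measurable with μ > 0 ν-a.e. on Δ, ∫_Δ μ dν ∈ (0, ∞), and ∫_Δ μ^{−1/(r−1)} dν < ∞. Let 1 < r < p < ∞, put p′ = p/(p−1), α = (p−1)/(r−1), and w = μ^{−p′/p} = μ^{−1/(p−1)}. Suppose the A_r condition holds on Δ with constant A ≥ 1: ((1/ν(Δ))·∫_Δ μ dν) · ((1/ν(Δ))·∫_Δ μ^{−1/(r−1)} dν)^{r−1} ≤ A. Then: (i) (1/ν(Δ))·∫_Δ w^α dν ≤ A^{1/(r−1)} · ((1/ν(Δ))·∫_Δ w dν)^α; and (ii) for every measurable set E ⊆ Δ, ∫_E w dν ≤ A^{1/(p−1)} · (ν(E)/ν(Δ))^{(p−r)/(p−1)} · ∫_Δ w dν. -/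
/-!
Write `⟨f⟩` for the average over `Δ` and `w = μ^{-1/(p-1)}`, so that `w^α = μ^{-1/(r-1)}`.
Hölder's inequality applied to `1 = μ^{1/p} μ^{-1/p}` gives `1 ≤ ⟨μ⟩ ⟨w⟩^{p-1}`; multiplying the
`A_r` condition `⟨μ⟩ ⟨w^α⟩^{r-1} ≤ A` by it yields `⟨w^α⟩^{r-1} ≤ A ⟨w⟩^{p-1}`, which is (i).
For (ii), Hölder's inequality with exponents `α, α'` on `E` gives
`∫_E w ≤ (∫_Δ w^α)^{1/α} ν(E)^{1-1/α}`, and (i) bounds the first factor by `⟨w⟩`.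
-/

open MeasureTheory Set
open scoped ENNReal

namespace ENNReal

lemma le_rpow_inv_mul_rpow_of_mul_rpow_le {m s w a : ℝ≥0∞} {t u : ℝ} (ht : 0 < t)
    (hA : m * s ^ t ≤ a) (hH : 1 ≤ m * w ^ u) : s ≤ a ^ (1 / t) * w ^ (u / t) := by
  have hst : s ^ t ≤ a * w ^ u := calc
    s ^ t = s ^ t * 1 := (mul_one _).symm
    _ ≤ s ^ t * (m * w ^ u) := by gcongr
    _ = m * s ^ t * w ^ u := by ring
    _ ≤ a * w ^ u := by gcongr
  calc s = (s ^ t) ^ t⁻¹ := (rpow_rpow_inv ht.ne' s).symm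
    _ ≤ (a * w ^ u) ^ t⁻¹ := by gcongr
    _ = a ^ (1 / t) * w ^ (u / t) := by
      rw [mul_rpow_of_nonneg _ _ (inv_nonneg.2 ht.le), ← rpow_mul, div_eq_mul_inv,
        div_eq_mul_inv, one_mul]

lemma one_le_inv_mul_mul_inv_mul_rpow {v m w : ℝ≥0∞} {p : ℝ} (hp : 1 < p) (hv0 : v ≠ 0)
    (hv : v ≠ ⊤) (h : v ≤ m ^ p⁻¹ * w ^ (1 - p⁻¹)) : 1 ≤ v⁻¹ * m * (v⁻¹ * w) ^ (p - 1) := by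
  have hp0 : 0 < p := zero_lt_one.trans hp
  have hvp : v ^ p ≤ m * w ^ (p - 1) := calc
    v ^ p ≤ (m ^ p⁻¹ * w ^ (1 - p⁻¹)) ^ p := by gcongr
    _ = m * w ^ (p - 1) := by
      rw [mul_rpow_of_nonneg _ _ hp0.le, ← rpow_mul, ← rpow_mul, inv_mul_cancel₀ hp0.ne',
        rpow_one, sub_mul, one_mul, inv_mul_cancel₀ hp0.ne']
  calc (1 : ℝ≥0∞) = v⁻¹ ^ p * v ^ p := by
        rw [← mul_rpow_of_nonneg _ _ hp0.le, ENNReal.inv_mul_cancel hv0 hv, one_rpow]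
    _ ≤ v⁻¹ ^ p * (m * w ^ (p - 1)) := by gcongr
    _ = v⁻¹ * m * (v⁻¹ * w) ^ (p - 1) := by
      have hsplit : v⁻¹ ^ p = v⁻¹ * v⁻¹ ^ (p - 1) := by
        conv_lhs => rw [show p = 1 + (p - 1) by ring]
        rw [rpow_add_of_nonneg _ _ zero_le_one (by linarith), rpow_one]
      rw [hsplit, mul_rpow_of_nonneg _ _ (by linarith)]
      ring

lemma le_rpow_inv_mul_div_rpow_mul {v s w e y a : ℝ≥0∞} {α : ℝ} (hα : 1 ≤ α) (hv0 : v ≠ 0)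
    (hv : v ≠ ⊤) (hs : v⁻¹ * s ≤ a * (v⁻¹ * w) ^ α) (hy : y ≤ s ^ α⁻¹ * e ^ (1 - α⁻¹)) :
    y ≤ a ^ α⁻¹ * (e / v) ^ (1 - α⁻¹) * w := by
  have hα0 : 0 < α := zero_lt_one.trans_le hα
  have hθ : 0 ≤ 1 - α⁻¹ := sub_nonneg.2 (inv_le_one_of_one_le₀ hα)
  have hs' : s ^ α⁻¹ ≤ v ^ α⁻¹ * (a ^ α⁻¹ * (v⁻¹ * w)) := calc
    s ^ α⁻¹ = (v * (v⁻¹ * s)) ^ α⁻¹ := by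
        rw [← mul_assoc, ENNReal.mul_inv_cancel hv0 hv, one_mul]
    _ = v ^ α⁻¹ * (v⁻¹ * s) ^ α⁻¹ := mul_rpow_of_nonneg _ _ (by positivity)
    _ ≤ v ^ α⁻¹ * (a * (v⁻¹ * w) ^ α) ^ α⁻¹ := by gcongr
    _ = v ^ α⁻¹ * (a ^ α⁻¹ * (v⁻¹ * w)) := by
        rw [mul_rpow_of_nonneg _ _ (by positivity), rpow_rpow_inv hα0.ne']
  have hv' : v ^ α⁻¹ * v⁻¹ = (v ^ (1 - α⁻¹))⁻¹ := by
    rw [rpow_sub _ _ hv0 hv, rpow_one, ENNReal.inv_div (Or.inr hv) (Or.inr hv0), div_eq_mul_inv]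
  calc y ≤ s ^ α⁻¹ * e ^ (1 - α⁻¹) := hy
    _ ≤ v ^ α⁻¹ * (a ^ α⁻¹ * (v⁻¹ * w)) * e ^ (1 - α⁻¹) := by gcongr
    _ = a ^ α⁻¹ * (e ^ (1 - α⁻¹) * (v ^ α⁻¹ * v⁻¹)) * w := by ring
    _ = a ^ α⁻¹ * (e / v) ^ (1 - α⁻¹) * w := by
        rw [hv', ← div_eq_mul_inv, ← div_rpow_of_nonneg _ _ hθ]

end ENNReal

section Holder

variable {X : Type*} [MeasurableSpace X] {ρ : Measure X}

lemma lintegral_le_lintegral_rpow_mul_measure_univ {f : X → ℝ≥0∞} (hf : AEMeasurable f ρ)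
    {α : ℝ} (hα : 1 < α) :
    ∫⁻ x, f x ∂ρ ≤ (∫⁻ x, f x ^ α ∂ρ) ^ α⁻¹ * ρ univ ^ (1 - α⁻¹) := by
  have hαq := Real.HolderConjugate.conjExponent hα
  simpa [hαq.one_sub_inv, one_div] using
    ENNReal.lintegral_mul_le_Lp_mul_Lq ρ hαq hf (aemeasurable_const (b := (1 : ℝ≥0∞)))

lemma lintegral_ofReal_rpow_rpow {μ : X → ℝ} (hpos : ∀ᵐ x ∂ρ, 0 < μ x) (a : ℝ) {b : ℝ}
    (hb : 0 ≤ b) :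
    ∫⁻ x, ENNReal.ofReal (μ x ^ a) ^ b ∂ρ = ∫⁻ x, ENNReal.ofReal (μ x ^ (a * b)) ∂ρ := by
  refine lintegral_congr_ae ?_
  filter_upwards [hpos] with x hx
  rw [ENNReal.ofReal_rpow_of_nonneg (by positivity) hb, Real.rpow_mul hx.le]

lemma measure_univ_le_lintegral_rpow_mul_lintegral_dual_rpow {μ : X → ℝ}
    (hμ : AEMeasurable μ ρ) (hpos : ∀ᵐ x ∂ρ, 0 < μ x) {p : ℝ} (hp : 1 < p) :
    ρ univ ≤ (∫⁻ x, ENNReal.ofReal (μ x) ∂ρ) ^ p⁻¹ *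
      (∫⁻ x, ENNReal.ofReal (μ x ^ (-(1 / (p - 1)))) ∂ρ) ^ (1 - p⁻¹) := by
  have hp0 : p ≠ 0 := by positivity
  have hpq := Real.HolderConjugate.conjExponent hp
  have H := ENNReal.lintegral_mul_le_Lp_mul_Lq ρ hpq
    (f := fun x ↦ ENNReal.ofReal (μ x ^ p⁻¹)) (g := fun x ↦ ENNReal.ofReal (μ x ^ (-p⁻¹)))
    (by fun_prop) (by fun_prop)
  have hfg : ∫⁻ x, ENNReal.ofReal (μ x ^ p⁻¹) * ENNReal.ofReal (μ x ^ (-p⁻¹)) ∂ρ = ρ univ := by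
    rw [← lintegral_one]
    refine lintegral_congr_ae ?_
    filter_upwards [hpos] with x hx
    rw [← ENNReal.ofReal_mul (by positivity), ← Real.rpow_add hx, add_neg_cancel,
      Real.rpow_zero, ENNReal.ofReal_one]
  have hf : ∫⁻ x, ENNReal.ofReal (μ x ^ p⁻¹) ^ p ∂ρ = ∫⁻ x, ENNReal.ofReal (μ x) ∂ρ := by
    simp only [lintegral_ofReal_rpow_rpow hpos _ hpq.nonneg, inv_mul_cancel₀ hp0, Real.rpow_one]
  have hg : ∫⁻ x, ENNReal.ofReal (μ x ^ (-p⁻¹)) ^ p.conjExponent ∂ρ =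
      ∫⁻ x, ENNReal.ofReal (μ x ^ (-(1 / (p - 1)))) ∂ρ := by
    rw [lintegral_ofReal_rpow_rpow hpos _ hpq.symm.nonneg, Real.conjExponent]
    congr! 4
    field_simp
  simp only [Pi.mul_apply, hfg, hf, hg] at H
  rwa [one_div p, one_div p.conjExponent, ← hpq.one_sub_inv] at H

end Holder

section Ar

variable {X : Type*} [MeasurableSpace X] {ν : Measure X} {Δ : Set X} {μ : X → ℝ} {r p : ℝ}

lemma dual_exponent_mul (hp : p - 1 ≠ 0) (hr : r - 1 ≠ 0) :
    -(1 / (p - 1)) * ((p - 1) / (r - 1)) = -(1 / (r - 1)) := by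
  field_simp

theorem reverseHolder_of_Ar (hμ : AEMeasurable μ (ν.restrict Δ))
    (hpos : ∀ᵐ x ∂ν.restrict Δ, 0 < μ x) (hΔ0 : ν Δ ≠ 0) (hΔ : ν Δ ≠ ⊤)
    (hr : 1 < r) (hp : 1 < p) {a : ℝ≥0∞}
    (hAr : ((ν Δ)⁻¹ * ∫⁻ x in Δ, ENNReal.ofReal (μ x) ∂ν) *
        ((ν Δ)⁻¹ * ∫⁻ x in Δ, ENNReal.ofReal (μ x ^ (-(1 / (r - 1)))) ∂ν) ^ (r - 1) ≤ a) :
    (ν Δ)⁻¹ * ∫⁻ x in Δ, ENNReal.ofReal (μ x ^ (-(1 / (r - 1)))) ∂ν ≤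
      a ^ (1 / (r - 1)) * ((ν Δ)⁻¹ * ∫⁻ x in Δ, ENNReal.ofReal (μ x ^ (-(1 / (p - 1)))) ∂ν) ^
        ((p - 1) / (r - 1)) := by
  have hHolder := measure_univ_le_lintegral_rpow_mul_lintegral_dual_rpow hμ hpos hp
  rw [Measure.restrict_apply_univ] at hHolder
  exact ENNReal.le_rpow_inv_mul_rpow_of_mul_rpow_le (sub_pos.2 hr) hAr
    (ENNReal.one_le_inv_mul_mul_inv_mul_rpow hp hΔ0 hΔ hHolder)

theorem setLIntegral_dual_le_of_Ar (hμ : AEMeasurable μ (ν.restrict Δ))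
    (hpos : ∀ᵐ x ∂ν.restrict Δ, 0 < μ x) (hΔ0 : ν Δ ≠ 0) (hΔ : ν Δ ≠ ⊤)
    (hr : 1 < r) (hrp : r < p) {a : ℝ≥0∞}
    (hAr : ((ν Δ)⁻¹ * ∫⁻ x in Δ, ENNReal.ofReal (μ x) ∂ν) *
        ((ν Δ)⁻¹ * ∫⁻ x in Δ, ENNReal.ofReal (μ x ^ (-(1 / (r - 1)))) ∂ν) ^ (r - 1) ≤ a)
    {E : Set X} (hE : E ⊆ Δ) :
    ∫⁻ x in E, ENNReal.ofReal (μ x ^ (-(1 / (p - 1)))) ∂ν ≤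
      a ^ (1 / (p - 1)) * (ν E / ν Δ) ^ ((p - r) / (p - 1)) *
        ∫⁻ x in Δ, ENNReal.ofReal (μ x ^ (-(1 / (p - 1)))) ∂ν := by
  have hr1 : 0 < r - 1 := sub_pos.2 hr
  have hp1 : 0 < p - 1 := by linarith
  have hα : 1 < (p - 1) / (r - 1) := (one_lt_div hr1).2 (by linarith)
  have hαinv : ((p - 1) / (r - 1))⁻¹ = (r - 1) / (p - 1) := inv_div _ _
  have hθ : 1 - (r - 1) / (p - 1) = (p - r) / (p - 1) := by field_simp; ring
  have hEΔ : ν.restrict E ≤ ν.restrict Δ := Measure.restrict_mono hE le_rfl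
  have hHolderE := lintegral_le_lintegral_rpow_mul_measure_univ
    (f := fun x ↦ ENNReal.ofReal (μ x ^ (-(1 / (p - 1)))))
    ((hμ.mono_measure hEΔ).pow_const _).ennreal_ofReal hα
  have hpowE : ∫⁻ x in E, ENNReal.ofReal (μ x ^ (-(1 / (p - 1)))) ^ ((p - 1) / (r - 1)) ∂ν ≤
      ∫⁻ x in Δ, ENNReal.ofReal (μ x ^ (-(1 / (r - 1)))) ∂ν := by
    rw [← dual_exponent_mul hp1.ne' hr1.ne', ← lintegral_ofReal_rpow_rpow hpos _ (by positivity)]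
    exact lintegral_mono' hEΔ le_rfl
  rw [Measure.restrict_apply_univ] at hHolderE
  have hy := ENNReal.le_rpow_inv_mul_div_rpow_mul hα.le hΔ0 hΔ
    (reverseHolder_of_Ar hμ hpos hΔ0 hΔ hr (hr.trans hrp) hAr) (hHolderE.trans (by gcongr))
  have ha : 1 / (r - 1) * ((r - 1) / (p - 1)) = 1 / (p - 1) := by field_simp
  rwa [← ENNReal.rpow_mul, hαinv, hθ, ha] at hy

end Ar

theorem statement13_general {X : Type*} [MeasurableSpace X] (ν : Measure X)
    (Δ : Set X) (hΔ0 : 0 < ν Δ) (hΔfin : ν Δ < ⊤)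
    (μ : X → ℝ) (hμmeas : Measurable μ)
    (hμpos : ∀ᵐ x ∂ν.restrict Δ, 0 < μ x)
    (r p : ℝ) (hr : 1 < r) (hrp : r < p)
    (A : ℝ) (hA : 1 ≤ A)
    (hAr : ((ν Δ)⁻¹ * ∫⁻ x in Δ, ENNReal.ofReal (μ x) ∂ν) *
        ((ν Δ)⁻¹ * ∫⁻ x in Δ, ENNReal.ofReal (μ x ^ (-(1 / (r - 1)))) ∂ν) ^ (r - 1)
        ≤ ENNReal.ofReal A) :
    ((ν Δ)⁻¹ * ∫⁻ x in Δ, ENNReal.ofReal ((μ x ^ (-(1 / (p - 1)))) ^ ((p - 1) / (r - 1))) ∂ν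
        ≤ ENNReal.ofReal (A ^ (1 / (r - 1))) *
          ((ν Δ)⁻¹ * ∫⁻ x in Δ, ENNReal.ofReal (μ x ^ (-(1 / (p - 1)))) ∂ν)
            ^ ((p - 1) / (r - 1))) ∧
    ∀ E ⊆ Δ, MeasurableSet E →
      (∫⁻ x in E, ENNReal.ofReal (μ x ^ (-(1 / (p - 1)))) ∂ν)
        ≤ ENNReal.ofReal (A ^ (1 / (p - 1))) * (ν E / ν Δ) ^ ((p - r) / (p - 1)) *
          ∫⁻ x in Δ, ENNReal.ofReal (μ x ^ (-(1 / (p - 1)))) ∂ν := by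
  have hA0 : 0 ≤ A := zero_le_one.trans hA
  have hr1 : 0 < r - 1 := sub_pos.2 hr
  have hp1 : 0 < p - 1 := by linarith
  have hwα : ∫⁻ x in Δ, ENNReal.ofReal ((μ x ^ (-(1 / (p - 1)))) ^ ((p - 1) / (r - 1))) ∂ν =
      ∫⁻ x in Δ, ENNReal.ofReal (μ x ^ (-(1 / (r - 1)))) ∂ν := by
    refine lintegral_congr_ae ?_
    filter_upwards [hμpos] with x hx
    rw [← Real.rpow_mul hx.le, dual_exponent_mul hp1.ne' hr1.ne']
  refine ⟨?_, fun E hE _ ↦ ?_⟩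
  · rw [hwα, ← ENNReal.ofReal_rpow_of_nonneg hA0 (one_div_pos.2 hr1).le]
    exact reverseHolder_of_Ar hμmeas.aemeasurable hμpos hΔ0.ne' hΔfin.ne hr (hr.trans hrp) hAr
  · rw [← ENNReal.ofReal_rpow_of_nonneg hA0 (one_div_pos.2 hp1).le]
    exact setLIntegral_dual_le_of_Ar hμmeas.aemeasurable hμpos hΔ0.ne' hΔfin.ne hr hrp hAr hE

/-- if `μ` satisfies the `A_r` condition on `Δ` with constant `A`, then the
dual weight `w = μ^{-1/(p-1)}` satisfies the reverse Hölder inequality with exponent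
`α = (p-1)/(r-1)` and the measure comparison with exponent `θ = (p-r)/(p-1)`. -/
theorem statement13 {X : Type*} [MeasurableSpace X] (ν : Measure X)
    (Δ : Set X) (hΔm : MeasurableSet Δ) (hΔ0 : 0 < ν Δ) (hΔfin : ν Δ < ⊤)
    (μ : X → ℝ) (hμmeas : Measurable μ) (hμnn : ∀ x, 0 ≤ μ x)
    (hμpos : ∀ᵐ x ∂ν.restrict Δ, 0 < μ x)
    (r p : ℝ) (hr : 1 < r) (hrp : r < p)
    (hμint0 : 0 < ∫⁻ x in Δ, ENNReal.ofReal (μ x) ∂ν)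
    (hμint : ∫⁻ x in Δ, ENNReal.ofReal (μ x) ∂ν < ⊤)
    (hμint' : ∫⁻ x in Δ, ENNReal.ofReal (μ x ^ (-(1 / (r - 1)))) ∂ν < ⊤)
    (A : ℝ) (hA : 1 ≤ A)
    (hAr : ((ν Δ)⁻¹ * ∫⁻ x in Δ, ENNReal.ofReal (μ x) ∂ν) *
        ((ν Δ)⁻¹ * ∫⁻ x in Δ, ENNReal.ofReal (μ x ^ (-(1 / (r - 1)))) ∂ν) ^ (r - 1)
        ≤ ENNReal.ofReal A) :
    ((ν Δ)⁻¹ * ∫⁻ x in Δ, ENNReal.ofReal ((μ x ^ (-(1 / (p - 1)))) ^ ((p - 1) / (r - 1))) ∂ν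
        ≤ ENNReal.ofReal (A ^ (1 / (r - 1))) *
          ((ν Δ)⁻¹ * ∫⁻ x in Δ, ENNReal.ofReal (μ x ^ (-(1 / (p - 1)))) ∂ν)
            ^ ((p - 1) / (r - 1))) ∧
    ∀ E ⊆ Δ, MeasurableSet E →
      (∫⁻ x in E, ENNReal.ofReal (μ x ^ (-(1 / (p - 1)))) ∂ν)
        ≤ ENNReal.ofReal (A ^ (1 / (p - 1))) * (ν E / ν Δ) ^ ((p - r) / (p - 1)) *
          ∫⁻ x in Δ, ENNReal.ofReal (μ x ^ (-(1 / (p - 1)))) ∂ν :=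
  statement13_general ν Δ hΔ0 hΔfin μ hμmeas hμpos r p hr hrp A hA hAr
end
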